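/- arXiv:1605.03875 — 3 statements merged into one kernel-verified Lean document; each statement's English description precedes it below -/
import Mathlib

section
/- For an n×n real matrix à = [[A, B],[Bᵀ, c]] as above, the elementary symmetric functions satisfy σ_r(Ã) = σ_r(A) + c·σ_{r−1}(A) − Σ_{j=2}^{r} (−1)^j (Bᵀ A^{j−2} B) σ_{r−j}(A) for every 1 ≤ r ≤ n. -/
/-!
Put `N = 1 + X • A` over `ℝ[X]`, so that `σ_r(A)` is the `r`-th coefficient of `det N`. The matrix
`1 + X • Ã` is `N` bordered by the column and row `X • B` and the corner `1 + c X`, and the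
determinant of a bordered matrix is `corner * det N - row ⬝ adj N ⬝ column`. Hence
`det (1 + X • Ã) = (1 + c X) det N - X² Bᵀ adj(N) B`. Comparing coefficients in
`adj(N) * N = det N • 1` gives `adj(N) = ∑ₖ Xᵏ ∑_{l ≤ k} σ_{k-l}(A) (-A)ˡ`, and the formula is the
coefficient of `X^r`.
-/

open Matrix

/-- `esigma M r` is the coefficient of `t^r` in `det(I + t M)`,
the `r`-th elementary symmetric function of the eigenvalues of `M`. -/
noncomputable def esigma {κ : Type} [Fintype κ] [DecidableEq κ] (M : Matrix κ κ ℝ) (r : ℕ) : ℝ :=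
  ((1 + (Polynomial.X : Polynomial ℝ) • M.map Polynomial.C).det).coeff r

open Polynomial

open scoped nonZeroDivisors

namespace Matrix

variable {R n : Type*} [Fintype n] [DecidableEq n]

theorem coeff_dotProduct_mulVec_comp_C [CommSemiring R] (M : Matrix n n R[X]) (u v : n → R)
    (k : ℕ) :
    ((C ∘ v : n → R[X]) ⬝ᵥ (M *ᵥ (C ∘ u))).coeff k = v ⬝ᵥ ((matPolyEquiv M).coeff k *ᵥ u) := by
  simp [dotProduct, mulVec, finsetSum_coeff, coeff_C_mul, coeff_mul_C, matPolyEquiv_coeff_apply,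
    Finset.mul_sum]

variable [CommRing R]

-- Right multiplication by `[[1, -adj M *ᵥ u], [0, det M]]` clears the top-right block,
-- because `M * adj M = det M • 1`.
theorem det_fromBlocks_replicateCol_replicateRow_mul_det (M : Matrix n n R) (u v : n → R) (d : R) :
    (fromBlocks M (replicateCol Unit u) (replicateRow Unit v) (of fun _ _ => d)).det * M.det
      = (d * M.det - v ⬝ᵥ (M.adjugate *ᵥ u)) * M.det := by
  have hmul : fromBlocks M (replicateCol Unit u) (replicateRow Unit v) (of fun _ _ => d) *
        fromBlocks 1 (replicateCol Unit (-(M.adjugate *ᵥ u))) 0 (of fun _ _ => M.det)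
      = fromBlocks M 0 (replicateRow Unit v)
          (of fun _ _ => d * M.det - v ⬝ᵥ (M.adjugate *ᵥ u)) := by
    rw [fromBlocks_multiply, ← replicateCol_mulVec, mulVec_neg, mulVec_mulVec, mul_adjugate,
      smul_mulVec, one_mulVec, replicateRow_mul_replicateCol]
    congr 1 <;> ext <;> simp [mul_apply, mul_comm]
    ring
  simpa only [det_mul, det_fromBlocks_zero₂₁, det_fromBlocks_zero₁₂, det_one,
    det_unique (n := Unit), of_apply, one_mul, mul_comm M.det] using congrArg det hmul

theorem det_fromBlocks_replicateCol_replicateRow {M : Matrix n n R} (hM : M.det ∈ R⁰)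
    (u v : n → R) (d : R) :
    (fromBlocks M (replicateCol Unit u) (replicateRow Unit v) (of fun _ _ => d)).det
      = d * M.det - v ⬝ᵥ (M.adjugate *ᵥ u) :=
  mul_cancel_right_mem_nonZeroDivisors hM |>.mp
    (det_fromBlocks_replicateCol_replicateRow_mul_det M u v d)

theorem det_one_add_X_smul_mem_nonZeroDivisors (A : Matrix n n R) :
    det (1 + (X : R[X]) • A.map C) ∈ R[X]⁰ := by
  nontriviality R
  have h0 : (det (1 + (X : R[X]) • A.map C)).coeff 0 = 1 := by
    -- `det (1 + X • A.map C)` is `(-A).charpolyRev`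
    simpa [charpolyRev, coeff_zero_eq_eval_zero, Matrix.map_neg, sub_eq_add_neg]
      using eval_charpolyRev (M := -A)
  apply mem_nonZeroDivisors_of_trailingCoeff
  rw [trailingCoeff, natTrailingDegree_eq_zero.mpr (Or.inr (by simp [h0])), h0]
  exact one_mem _

theorem coeff_matPolyEquiv_adjugate_one_add_X_smul (A : Matrix n n R) (k : ℕ) :
    (matPolyEquiv (adjugate (1 + (X : R[X]) • A.map C))).coeff k
      = ∑ l ∈ Finset.range (k + 1), (det (1 + (X : R[X]) • A.map C)).coeff (k - l) • (-A) ^ l := by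
  set N := 1 + (X : R[X]) • A.map C
  set P := matPolyEquiv N.adjugate
  have hP : P * (1 + X * C A) = N.det.map (algebraMap R (Matrix n n R)) := by
    rw [← matPolyEquiv_smul_one, ← adjugate_mul, map_mul]
    simp [N, P]
  have h0 : P.coeff 0 = N.det.coeff 0 • 1 := by
    simpa [mul_add, ← mul_assoc, Algebra.algebraMap_eq_smul_one] using congrArg (coeff · 0) hP
  have hsucc (k : ℕ) : P.coeff (k + 1) = N.det.coeff (k + 1) • 1 - P.coeff k * A := by
    have := congrArg (coeff · (k + 1)) hP
    simp only [mul_add, mul_one, ← mul_assoc, coeff_add, coeff_mul_C, coeff_mul_X,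
      coeff_map] at this
    rw [← Algebra.algebraMap_eq_smul_one, ← this, add_sub_cancel_right]
  induction k with
  | zero => simp [h0]
  | succ k ih =>
    rw [hsucc, ih, Finset.sum_range_succ' _ (k + 1), Finset.sum_mul, sub_eq_neg_add,
      ← Finset.sum_neg_distrib]
    simp [pow_succ, Nat.succ_sub_succ]

theorem det_one_add_X_smul_fromBlocks (A : Matrix n n R) (u v : n → R) (d : R) :
    det (1 + (X : R[X]) •
        (fromBlocks A (replicateCol Unit u) (replicateRow Unit v) (of fun _ _ => d)).map C)
      = (1 + X * C d) * det (1 + (X : R[X]) • A.map C)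
        - X ^ 2 * ((C ∘ v) ⬝ᵥ (adjugate (1 + (X : R[X]) • A.map C) *ᵥ (C ∘ u))) := by
  have hblocks : 1 + (X : R[X]) •
        (fromBlocks A (replicateCol Unit u) (replicateRow Unit v) (of fun _ _ => d)).map C
      = fromBlocks (1 + (X : R[X]) • A.map C) (replicateCol Unit ((X : R[X]) • (C ∘ u)))
          (replicateRow Unit ((X : R[X]) • (C ∘ v))) (of fun _ _ => 1 + X * C d) := by
    rw [fromBlocks_map, fromBlocks_smul, ← fromBlocks_one, fromBlocks_add]
    congr 1 <;> ext <;> simp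
  rw [hblocks, det_fromBlocks_replicateCol_replicateRow (det_one_add_X_smul_mem_nonZeroDivisors A),
    mulVec_smul, dotProduct_smul, smul_dotProduct, smul_smul, smul_eq_mul, sq]

theorem coeff_succ_det_one_add_X_smul_fromBlocks (A : Matrix n n R) (u v : n → R) (d : R)
    (k : ℕ) :
    let σ := (det (1 + (X : R[X]) • A.map C)).coeff
    (det (1 + (X : R[X]) •
        (fromBlocks A (replicateCol Unit u) (replicateRow Unit v) (of fun _ _ => d)).map C)).coeff
        (k + 1)
      = σ (k + 1) + d * σ k - ∑ l ∈ Finset.range k, σ (k - 1 - l) * (v ⬝ᵥ ((-A) ^ l *ᵥ u)) := by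
  rw [det_one_add_X_smul_fromBlocks, coeff_sub, add_mul, one_mul, coeff_add, mul_assoc,
    coeff_X_mul, coeff_C_mul, coeff_X_pow_mul']
  rcases k with _ | k
  · simp
  · simp [coeff_dotProduct_mulVec_comp_C, coeff_matPolyEquiv_adjugate_one_add_X_smul, sum_mulVec,
      dotProduct_sum, smul_mulVec]

end Matrix

theorem sigma_block_formula_general {m : ℕ}
    (A : Matrix (Fin m) (Fin m) ℝ) (B : Fin m → ℝ) (c : ℝ)
    (r : ℕ) (hr1 : 1 ≤ r) :
    esigma (Matrix.fromBlocks A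
        (Matrix.of fun i (_ : Unit) => B i)
        (Matrix.of fun (_ : Unit) j => B j)
        (Matrix.of fun (_ : Unit) (_ : Unit) => c)) r
      = esigma A r + c * esigma A (r - 1)
        - ∑ j ∈ Finset.Icc 2 r, (-1 : ℝ) ^ j * (B ⬝ᵥ (A ^ (j - 2) *ᵥ B)) * esigma A (r - j) := by
  obtain ⟨k, rfl⟩ := Nat.exists_eq_add_of_le' hr1
  refine (coeff_succ_det_one_add_X_smul_fromBlocks A B B c k).trans ?_
  rw [← Finset.Ico_add_one_right_eq_Icc, Finset.sum_Ico_eq_sum_range, Nat.add_sub_cancel]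
  congr 1
  refine Finset.sum_congr (by simp) fun l _ => ?_
  rw [← neg_one_smul ℝ A, _root_.smul_pow, smul_mulVec, dotProduct_smul, smul_eq_mul, pow_add,
    neg_one_sq, Nat.add_sub_cancel_left, show k + 1 - (2 + l) = k - 1 - l by omega]
  simp only [esigma]
  ring

/-- symmetric functions of the block matrix `Ã = [[A, B],[Bᵀ, c]]`:
`σ_r(Ã) = σ_r(A) + c σ_{r−1}(A) − ∑_{j=2}^r (−1)^j (Bᵀ A^{j−2} B) σ_{r−j}(A)` for `1 ≤ r ≤ n`. -/
theorem sigma_block_formula {m : ℕ}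
    (A : Matrix (Fin m) (Fin m) ℝ) (B : Fin m → ℝ) (c : ℝ)
    (r : ℕ) (hr1 : 1 ≤ r) (hrn : r ≤ m + 1) :
    esigma (Matrix.fromBlocks A
        (Matrix.of fun i (_ : Unit) => B i)
        (Matrix.of fun (_ : Unit) j => B j)
        (Matrix.of fun (_ : Unit) (_ : Unit) => c)) r
      = esigma A r + c * esigma A (r - 1)
        - ∑ j ∈ Finset.Icc 2 r, (-1 : ℝ) ^ j * (B ⬝ᵥ (A ^ (j - 2) *ᵥ B)) * esigma A (r - j) :=
  sigma_block_formula_general A B c r hr1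
end

section
/- Let A_Σ be an (n−1)×(n−1) real symmetric matrix, ρ, μ ∈ ℝ^q, and set A_α = ρ_α A_Σ + μ_α I for α = 1,…,q. Then for every multi-index u ∈ ℕ^q with |u| ≤ n−1, the coefficient σ̃_u of t^u in det(I + Σ_α t_α A_α) equals (1/(n−1−|u|)!) Σ_{l ≤ u} multinomial(|l|; l) · ρ^l μ^{u−l} · multinomial(n−1−|l|; u−l, n−1−|u|) · σ_{|l|}(A_Σ). -/
/-- `msigma A u` is the coefficient of `t^u = ∏ α, t α ^ u α` in the Newton polynomial
`det(I + ∑ α, t α • A α)`. -/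
noncomputable def msigma {ι κ : Type} [Fintype ι] [DecidableEq ι] [Fintype κ] [DecidableEq κ]
    (A : ι → Matrix κ κ ℝ) (u : ι → ℕ) : ℝ :=
  MvPolynomial.coeff (Finsupp.equivFunOnFinite.symm u)
    ((1 + ∑ α, (MvPolynomial.X α : MvPolynomial ι ℝ) • (A α).map MvPolynomial.C).det)

open MvPolynomial Finset
open Finsupp (equivFunOnFinite)

namespace Matrix

variable {n σ R : Type*} [Fintype n] [DecidableEq n] [CommRing R]

theorem isHomogeneous_det {M : Matrix n n (MvPolynomial σ R)} {k : ℕ}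
    (hM : ∀ i j, (M i j).IsHomogeneous k) : M.det.IsHomogeneous (k * Fintype.card n) := by
  rw [det_apply]
  refine IsHomogeneous.sum _ _ _ fun e _ => ?_
  have hprod := IsHomogeneous.prod univ (fun i => M (e i) i) (fun _ => k) fun i _ => hM _ _
  simp only [sum_const, card_univ, smul_eq_mul, mul_comm] at hprod
  have h := (isHomogeneous_C σ ((Equiv.Perm.sign e : ℤ) : R)).mul hprod
  rwa [zero_add, map_intCast, ← zsmul_eq_mul] at h

/-- `det (Y • 1 + X • M)` with `X = X 0` and `Y = X 1`, the convention of
`Polynomial.homogenize`. -/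
noncomputable def pencilDet (M : Matrix n n R) : MvPolynomial (Fin 2) R :=
  det ((X 1 : MvPolynomial (Fin 2) R) • 1 + (X 0 : MvPolynomial (Fin 2) R) • M.map C)

theorem isHomogeneous_pencilDet (M : Matrix n n R) :
    (pencilDet M).IsHomogeneous (Fintype.card n) := by
  refine one_mul (Fintype.card n) ▸ isHomogeneous_det fun i j => ?_
  have h1 : ((1 : Matrix n n (MvPolynomial (Fin 2) R)) i j).IsHomogeneous 0 := by
    rw [one_apply]
    split_ifs
    exacts [isHomogeneous_one _ _, isHomogeneous_zero _ _ _]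
  simpa using
    ((isHomogeneous_X R 1).mul h1).add ((isHomogeneous_X R 0).mul (isHomogeneous_C _ (M i j)))

theorem aeval_pencilDet {A : Type*} [CommRing A] [Algebra R A] (M : Matrix n n R) (a b : A) :
    aeval ![b, a] (pencilDet M) = det (a • 1 + b • M.map (algebraMap R A)) := by
  rw [pencilDet, AlgHom.map_det]
  congr 1
  ext i j
  by_cases h : i = j <;> simp [h]

theorem homogenize_det_one_add_X_smul (M : Matrix n n R) :
    (det (1 + (Polynomial.X : Polynomial R) • M.map Polynomial.C)).homogenize (Fintype.card n)
      = pencilDet M :=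
  Polynomial.homogenize_eq_of_isHomogeneous (isHomogeneous_pencilDet M) <| by
    rw [aeval_pencilDet, one_smul, Polynomial.algebraMap_eq]

theorem det_smul_one_add_smul {A : Type*} [CommRing A] [Algebra R A] (M : Matrix n n R)
    (a b : A) :
    det (a • 1 + b • M.map (algebraMap R A)) = ∑ k ∈ range (Fintype.card n + 1),
      algebraMap R A ((det (1 + (Polynomial.X : Polynomial R) • M.map Polynomial.C)).coeff k) *
        (b ^ k * a ^ (Fintype.card n - k)) := by
  rw [← aeval_pencilDet, ← homogenize_det_one_add_X_smul, Polynomial.homogenize, map_sum,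
    Nat.sum_antidiagonal_eq_sum_range_succ_mk]
  refine sum_congr rfl fun k _ => ?_
  simp [aeval_monomial, Finsupp.prod_fintype]

end Matrix

theorem Nat.choose_sum_mul_multinomial_mul {ι : Type*} (s : Finset ι) (v : ι → ℕ) {N : ℕ}
    (hv : ∑ i ∈ s, v i ≤ N) :
    N.choose (∑ i ∈ s, v i) * multinomial s v *
      ((N - ∑ i ∈ s, v i).factorial * ∏ i ∈ s, (v i).factorial) = N.factorial := by
  rw [← Nat.choose_mul_factorial_mul_factorial hv, ← multinomial_spec]
  ring

namespace MvPolynomial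

variable {σ : Type*} [Fintype σ]

theorem coeff_equivFunOnFinite_mul {R : Type*} [CommSemiring R] [DecidableEq σ]
    (p q : MvPolynomial σ R) (u : σ → ℕ) :
    coeff (equivFunOnFinite.symm u) (p * q) = ∑ l ∈ Iic u,
      coeff (equivFunOnFinite.symm l) p * coeff (equivFunOnFinite.symm (u - l)) q := by
  rw [coeff_mul]
  have hsnd : ∀ d ∈ antidiagonal (equivFunOnFinite.symm u),
      equivFunOnFinite.symm (u - ⇑d.1) = d.2 := fun d hd => by
    ext i
    have := congr($(mem_antidiagonal.mp hd) i)
    simp only [Finsupp.coe_equivFunOnFinite_symm, Pi.sub_apply, Finsupp.add_apply] at this ⊢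
    omega
  refine sum_nbij' (fun d => ⇑d.1)
    (fun l => (equivFunOnFinite.symm l, equivFunOnFinite.symm (u - l)))
    (fun d hd => ?_) (fun l hl => ?_) (fun d hd => ?_) (fun l _ => ?_) (fun d hd => ?_)
  · refine mem_Iic.mpr fun i => ?_
    have := congr($(mem_antidiagonal.mp hd) i)
    simp only [Finsupp.coe_equivFunOnFinite_symm, Finsupp.add_apply] at this
    exact this ▸ Nat.le_add_right _ _
  · refine mem_antidiagonal.mpr (Finsupp.ext fun i => ?_)
    simp [Nat.add_sub_of_le (mem_Iic.mp hl i)]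
  · exact Prod.ext (equivFunOnFinite.symm_apply_apply _) (hsnd d hd)
  · exact equivFunOnFinite.apply_symm_apply l
  · simp [hsnd d hd]

theorem coeff_equivFunOnFinite_linear_pow {R : Type*} [CommSemiring R] (w : σ → R)
    (l : σ → ℕ) (k : ℕ) :
    coeff (equivFunOnFinite.symm l) ((∑ i, w i • X i : MvPolynomial σ R) ^ k) =
      if ∑ i, l i = k then (Nat.multinomial univ l : R) * ∏ i, w i ^ l i else 0 := by
  rw [coeff_linearCombination_X_pow_of_fintype]
  simp [Finsupp.sum_fintype, Finsupp.prod_fintype,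
    Finsupp.multinomial_eq_of_support_subset (subset_univ _)]

theorem coeff_equivFunOnFinite_one_add_linear_pow {R : Type*} [CommSemiring R] (w : σ → R)
    (v : σ → ℕ) {N : ℕ} (hv : ∑ i, v i ≤ N) :
    coeff (equivFunOnFinite.symm v) ((1 + ∑ i, w i • X i : MvPolynomial σ R) ^ N) =
      (N.choose (∑ i, v i) * Nat.multinomial univ v : R) * ∏ i, w i ^ v i := by
  rw [add_comm, add_pow, coeff_sum, sum_eq_single (∑ i, v i)]
  · rw [one_pow, mul_one, ← C_eq_coe_nat, mul_comm, coeff_C_mul,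
      coeff_equivFunOnFinite_linear_pow, if_pos rfl, mul_assoc]
  · intro k _ hk
    rw [one_pow, mul_one, ← C_eq_coe_nat, mul_comm, coeff_C_mul,
      coeff_equivFunOnFinite_linear_pow, if_neg (Ne.symm hk), mul_zero]
  · exact fun h => absurd (mem_range.mpr (Nat.lt_succ_of_le hv)) h

theorem coeff_equivFunOnFinite_one_add_linear_pow_eq_div {K : Type*} [Field K] [CharZero K]
    (w : σ → K) (v : σ → ℕ) {N : ℕ} (hv : ∑ i, v i ≤ N) :
    coeff (equivFunOnFinite.symm v) ((1 + ∑ i, w i • X i : MvPolynomial σ K) ^ N) =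
      N.factorial / ((N - ∑ i, v i).factorial * ∏ i, ((v i).factorial : K)) *
        ∏ i, w i ^ v i := by
  have h := congr((↑$(Nat.choose_sum_mul_multinomial_mul univ v hv) : K))
  push_cast at h
  have hne : ((N - ∑ i, v i).factorial * ∏ i, ((v i).factorial : K)) ≠ 0 :=
    mul_ne_zero (Nat.cast_ne_zero.mpr (Nat.factorial_ne_zero _))
      (prod_ne_zero_iff.mpr fun i _ => Nat.cast_ne_zero.mpr (Nat.factorial_ne_zero _))
  rw [coeff_equivFunOnFinite_one_add_linear_pow w v hv, ← h, mul_div_cancel_right₀ _ hne]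

end MvPolynomial

theorem one_add_sum_X_smul_map_smul_add_smul_one {ι κ K : Type*} [Fintype ι] [Fintype κ]
    [DecidableEq κ] [CommRing K] (S : Matrix κ κ K) (ρ μ : ι → K) :
    1 + ∑ α, (X α : MvPolynomial ι K) • (ρ α • S + μ α • (1 : Matrix κ κ K)).map C
      = (1 + ∑ α, μ α • (X α : MvPolynomial ι K)) • (1 : Matrix κ κ (MvPolynomial ι K))
        + (∑ α, ρ α • (X α : MvPolynomial ι K)) • S.map (algebraMap K (MvPolynomial ι K)) := by
  refine Matrix.ext fun i j => ?_
  rcases eq_or_ne i j with rfl | h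
  · simp only [Matrix.add_apply, Matrix.sum_apply, Matrix.smul_apply, Matrix.map_apply,
      Matrix.one_apply_eq, smul_eq_C_mul, smul_eq_mul, mul_one, map_add, map_mul, sum_mul,
      add_assoc, ← sum_add_distrib, algebraMap_eq]
    exact congrArg _ (sum_congr rfl fun _ _ => by ring)
  · simp [Matrix.sum_apply, smul_eq_C_mul, sum_mul, Matrix.one_apply_ne h]
    exact sum_congr rfl fun _ _ => by ring

theorem msigma_smul_add_smul_one {ι κ : Type} [Fintype ι] [DecidableEq ι] [Fintype κ]
    [DecidableEq κ] (S : Matrix κ κ ℝ) (ρ μ : ι → ℝ) (u : ι → ℕ) :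
    msigma (fun α => ρ α • S + μ α • (1 : Matrix κ κ ℝ)) u =
      ∑ k ∈ range (Fintype.card κ + 1), esigma S k * coeff (equivFunOnFinite.symm u)
        ((∑ α, ρ α • X α) ^ k * (1 + ∑ α, μ α • X α) ^ (Fintype.card κ - k)) := by
  rw [msigma, one_add_sum_X_smul_map_smul_add_smul_one, Matrix.det_smul_one_add_smul, coeff_sum]
  simp only [algebraMap_eq, coeff_C_mul]
  rfl

theorem sigma_umbilical_formula_general {m q : ℕ}
    (S : Matrix (Fin m) (Fin m) ℝ)
    (ρ μ : Fin q → ℝ) (u : Fin q → ℕ) (hu : ∑ α, u α ≤ m) :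
    msigma (fun α => ρ α • S + μ α • (1 : Matrix (Fin m) (Fin m) ℝ)) u
      = (1 / ((m - ∑ α, u α).factorial : ℝ)) *
        ∑ l ∈ Finset.Iic u,
          (Nat.multinomial Finset.univ l : ℝ) *
          (∏ α, ρ α ^ l α) * (∏ α, μ α ^ (u α - l α)) *
          (((m - ∑ α, l α).factorial : ℝ) / ∏ α, ((u α - l α).factorial : ℝ)) *
          esigma S (∑ α, l α) := by
  rw [msigma_smul_add_smul_one, Fintype.card_fin]
  simp_rw [coeff_equivFunOnFinite_mul, mul_sum]
  rw [sum_comm]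
  refine sum_congr rfl fun l hl => ?_
  have hle : ∀ α ∈ univ, l α ≤ u α := fun α _ => mem_Iic.mp hl α
  have hlu : ∑ α, l α ≤ ∑ α, u α := sum_le_sum hle
  have hsub : ∑ α, (u - l) α = ∑ α, u α - ∑ α, l α := sum_tsub_distrib univ hle
  simp_rw [coeff_equivFunOnFinite_linear_pow, ite_mul, zero_mul, mul_ite, mul_zero]
  rw [sum_ite_eq, if_pos (mem_range.mpr (by omega)),
    coeff_equivFunOnFinite_one_add_linear_pow_eq_div _ _ (by omega), hsub,
    show m - ∑ α, l α - (∑ α, u α - ∑ α, l α) = m - ∑ α, u α by omega]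
  simp only [Pi.sub_apply]
  ring

/-- with `A_α = ρ_α A_Σ + μ_α I`, for `|u| ≤ n−1`:
`σ̃_u = (1/(n−1−|u|)!) ∑_{l ≤ u} multinomial(|l|; l) ρ^l μ^{u−l}
  ((n−1−|l|)!/∏(u−l)!) σ_{|l|}(A_Σ)`. -/
theorem sigma_umbilical_formula {m q : ℕ}
    (S : Matrix (Fin m) (Fin m) ℝ) (hsymm : S.IsSymm)
    (ρ μ : Fin q → ℝ) (u : Fin q → ℕ) (hu : ∑ α, u α ≤ m) :
    msigma (fun α => ρ α • S + μ α • (1 : Matrix (Fin m) (Fin m) ℝ)) u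
      = (1 / ((m - ∑ α, u α).factorial : ℝ)) *
        ∑ l ∈ Finset.Iic u,
          (Nat.multinomial Finset.univ l : ℝ) *
          (∏ α, ρ α ^ l α) * (∏ α, μ α ^ (u α - l α)) *
          (((m - ∑ α, l α).factorial : ℝ) / ∏ α, ((u α - l α).factorial : ℝ)) *
          esigma S (∑ α, l α) :=
  sigma_umbilical_formula_general S ρ μ u hu
end

section
/- Let A_Σ be an (n−1)×(n−1) symmetric matrix, ρ, μ ∈ ℝ^q, Ã_α = ρ_α A_Σ + μ_α I, and Ā = (A_Σ, μ₁I, …, μ_qI). Then for every multi-index u ∈ ℕ^q with |u| ≤ n−1: σ_u(Ã₁,…,Ã_q) = Σ_{l ≤ u} multinomial(|l|; l) · ρ^l · σ̄_{(|l|, u−l)}, where σ̄_{(j,v)} is the coefficient of s^j t^v in det(I + sA_Σ + Σ_α t_α μ_α I). -/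
/-!
Substituting `s ↦ ∑ α, ρ α t α` in `det (I + s A_Σ + ∑ α, t α μ α I)` turns the matrix into
`I + ∑ α, t α (ρ α A_Σ + μ α I)`, and the substitution commutes with `det`. By the multinomial
theorem a monomial `a s^j t^v` becomes `∑_{|k| = j} multinomial(k) ρ^k a t^(k + v)`, so the
coefficient of `t^u` after substitution collects, for each `l ≤ u`, the coefficient of
`s^|l| t^(u - l)` weighted by `multinomial(l) ρ^l`.
-/

open MvPolynomial Finset

section Substitution

variable {R σ : Type*} [CommSemiring R] [Fintype σ]

noncomputable def substLinearForm (ρ : σ → R) : MvPolynomial (Unit ⊕ σ) R →ₐ[R] MvPolynomial σ R :=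
  aeval (Sum.elim (fun _ => ∑ α, ρ α • X α) X)

lemma substLinearForm_monomial (ρ : σ → R) (j : ℕ) (v : σ → ℕ) (a : R) :
    substLinearForm ρ (monomial (Finsupp.equivFunOnFinite.symm (Sum.elim (fun _ => j) v)) a)
      = (∑ α, ρ α • X α) ^ j * monomial (Finsupp.equivFunOnFinite.symm v) a := by
  rw [substLinearForm, aeval_monomial, monomial_eq]
  simp only [algebraMap_eq, Finsupp.prod_fintype _ _ fun _ => pow_zero _, Fintype.prod_sum_type,
    Finsupp.equivFunOnFinite_symm_apply_apply, Sum.elim_inl, Sum.elim_inr, Fintype.prod_unique]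
  ring

lemma coeff_substLinearForm_monomial (ρ : σ → R) (u : σ → ℕ) (j : ℕ) (v : σ → ℕ) (a : R) :
    coeff (Finsupp.equivFunOnFinite.symm u)
        (substLinearForm ρ (monomial (Finsupp.equivFunOnFinite.symm (Sum.elim (fun _ => j) v)) a))
      = if (∀ α, v α ≤ u α) ∧ ∑ α, (u - v) α = j then
          Nat.multinomial univ (u - v) * (∏ α, ρ α ^ (u - v) α) * a
        else 0 := by
  have hle : Finsupp.equivFunOnFinite.symm v ≤ Finsupp.equivFunOnFinite.symm u ↔ ∀ α, v α ≤ u α :=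
    Finsupp.le_def
  have hsub : Finsupp.equivFunOnFinite.symm u - Finsupp.equivFunOnFinite.symm v
      = Finsupp.equivFunOnFinite.symm (u - v) := by ext; rfl
  rw [substLinearForm_monomial, coeff_mul_monomial', hsub, coeff_linearCombination_X_pow_of_fintype,
    Finsupp.sum_fintype _ _ fun _ => rfl, Finsupp.prod_fintype _ _ fun _ => pow_zero _,
    ← Finsupp.multinomial_of_support_subset (subset_univ _)]
  simp only [hle, ite_and, Finsupp.coe_equivFunOnFinite_symm]
  -- the two tests `∑ α, (u - v) α = j` carry different `Decidable` instances
  split_ifs <;> simp_all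

lemma sumElim_eq_sumElim_sub_iff {u v l : σ → ℕ} {j : ℕ} (hl : l ≤ u) :
    Sum.elim (fun _ : Unit => j) v = Sum.elim (fun _ => ∑ α, l α) (u - l)
      ↔ l = u - v ∧ (∀ α, v α ≤ u α) ∧ ∑ α, (u - v) α = j := by
  rw [Sum.elim_eq_iff]
  constructor
  · rintro ⟨hj, rfl⟩
    have hl' : u - (u - l) = l := funext fun α => by
      have : l α ≤ u α := hl α
      simp only [Pi.sub_apply]
      omega
    exact ⟨hl'.symm, fun α => Nat.sub_le _ _, by rw [hl', congrFun hj ()]⟩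
  · rintro ⟨rfl, hvu, hj⟩
    refine ⟨funext fun _ => hj.symm, funext fun α => ?_⟩
    have := hvu α
    simp only [Pi.sub_apply]
    omega

variable [DecidableEq σ]

lemma coeff_substLinearForm (ρ : σ → R) (u : σ → ℕ) (P : MvPolynomial (Unit ⊕ σ) R) :
    coeff (Finsupp.equivFunOnFinite.symm u) (substLinearForm ρ P)
      = ∑ l ∈ Iic u, (Nat.multinomial univ l : R) * (∏ α, ρ α ^ l α) *
          coeff (Finsupp.equivFunOnFinite.symm (Sum.elim (fun _ => ∑ α, l α) (u - l))) P := by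
  induction P using MvPolynomial.induction_on' with
  | add p q hp hq => simp only [map_add, coeff_add, hp, hq, mul_add, sum_add_distrib]
  | monomial d a =>
    obtain ⟨j, v, rfl⟩ : ∃ j v, d = Finsupp.equivFunOnFinite.symm (Sum.elim (fun _ => j) v) :=
      ⟨d (.inl ()), fun α => d (.inr α), by ext (_ | _) <;> rfl⟩
    simp only [coeff_substLinearForm_monomial, coeff_monomial,
      Finsupp.equivFunOnFinite.symm.injective.eq_iff, mul_ite, mul_zero]
    symm
    calc _ = ∑ l ∈ Iic u, if l = u - v then
          (if (∀ α, v α ≤ u α) ∧ ∑ α, (u - v) α = j then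
            Nat.multinomial univ l * (∏ α, ρ α ^ l α) * a else 0) else 0 :=
          sum_congr rfl fun l hl => by
            rw [if_congr (sumElim_eq_sumElim_sub_iff (mem_Iic.mp hl)) rfl rfl, ite_and]
      _ = _ := by rw [sum_ite_eq', if_pos (mem_Iic.mpr fun α => Nat.sub_le _ _)]

end Substitution

section NewtonMatrix

variable {R ι κ : Type*} [CommSemiring R] [Fintype ι] [DecidableEq κ]

noncomputable def newtonMatrix (A : ι → Matrix κ κ R) : Matrix κ κ (MvPolynomial ι R) :=
  1 + ∑ α, (X α : MvPolynomial ι R) • (A α).map C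

lemma newtonMatrix_map_substLinearForm (S : Matrix κ κ R) (B : ι → Matrix κ κ R) (ρ : ι → R) :
    (newtonMatrix (Sum.elim (fun _ : Unit => S) B)).map (substLinearForm ρ)
      = newtonMatrix (fun α => ρ α • S + B α) := by
  ext i j : 1
  simp only [newtonMatrix, substLinearForm, Matrix.map_apply, Matrix.add_apply, Matrix.one_apply,
    Matrix.sum_apply, Matrix.smul_apply, Fintype.sum_sum_type, apply_ite, map_add, map_sum,
    map_mul, map_one, map_zero, smul_eq_mul, aeval_X, aeval_C, algebraMap_eq, Sum.elim_inl,
    Sum.elim_inr, Fintype.sum_unique, smul_eq_C_mul, sum_mul, mul_add, sum_add_distrib]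
  congr 2
  exact sum_congr rfl fun _ _ => by ring

end NewtonMatrix

lemma msigma_eq_coeff_det_newtonMatrix {ι κ : Type} [Fintype ι] [DecidableEq ι] [Fintype κ]
    [DecidableEq κ] (A : ι → Matrix κ κ ℝ) (u : ι → ℕ) :
    msigma A u = coeff (Finsupp.equivFunOnFinite.symm u) (newtonMatrix A).det :=
  rfl

theorem sigma_umbilical_via_bar_general {m q : ℕ}
    (S : Matrix (Fin m) (Fin m) ℝ)
    (ρ μ : Fin q → ℝ) (u : Fin q → ℕ) :
    msigma (fun α => ρ α • S + μ α • (1 : Matrix (Fin m) (Fin m) ℝ)) u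
      = ∑ l ∈ Finset.Iic u,
          (Nat.multinomial Finset.univ l : ℝ) * (∏ α, ρ α ^ l α) *
          msigma
            (Sum.elim (fun _ : Unit => S)
              (fun α : Fin q => μ α • (1 : Matrix (Fin m) (Fin m) ℝ)))
            (Sum.elim (fun _ : Unit => ∑ α, l α) (u - l)) := by
  have hdet : (newtonMatrix fun α => ρ α • S + μ α • (1 : Matrix (Fin m) (Fin m) ℝ)).det
      = substLinearForm ρ (newtonMatrix (Sum.elim (fun _ : Unit => S)
          fun α => μ α • (1 : Matrix (Fin m) (Fin m) ℝ))).det := by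
    rw [AlgHom.map_det, AlgHom.mapMatrix_apply, newtonMatrix_map_substLinearForm]
  simp only [msigma_eq_coeff_det_newtonMatrix, hdet, coeff_substLinearForm]

/-- with `Ã_α = ρ_α A_Σ + μ_α I` and `Ā = (A_Σ, μ₁ I, …, μ_q I)`,
`σ_u(Ã) = ∑_{l ≤ u} multinomial(|l|; l) ρ^l σ̄_{(|l|, u−l)}` for `|u| ≤ n−1`. -/
theorem sigma_umbilical_via_bar {m q : ℕ}
    (S : Matrix (Fin m) (Fin m) ℝ) (hsymm : S.IsSymm)
    (ρ μ : Fin q → ℝ) (u : Fin q → ℕ) (hu : ∑ α, u α ≤ m) :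
    msigma (fun α => ρ α • S + μ α • (1 : Matrix (Fin m) (Fin m) ℝ)) u
      = ∑ l ∈ Finset.Iic u,
          (Nat.multinomial Finset.univ l : ℝ) * (∏ α, ρ α ^ l α) *
          msigma
            (Sum.elim (fun _ : Unit => S)
              (fun α : Fin q => μ α • (1 : Matrix (Fin m) (Fin m) ℝ)))
            (Sum.elim (fun _ : Unit => ∑ α, l α) (u - l)) :=
  sigma_umbilical_via_bar_general S ρ μ u
end
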